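/- arXiv:2603.23147 — 7 statements merged into one kernel-verified Lean document; each statement's English description precedes it below -/
import Mathlib

section
/- Let N ≥ 1 and let A_0, …, A_{N−1} be n×n real matrices. Let Ǎ be the Nn×Nn block matrix whose (i,j) block (for i,j ∈ {0,…,N−1}) equals A_j if i = (j+1) mod N and 0 otherwise. Then for every complex number z, det(z·I_{Nn} − Ǎ) = det(z^N·I_n − A_{N−1}A_{N−2}···A_0), where the determinants are taken over ℂ. -/
open Matrix
open scoped ENNReal NNReal

/-- Spectral radius of a real square matrix: the spectral radius (max |λ| over complex
eigenvalues) of the matrix viewed as a complex matrix. -/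
noncomputable def specRad {ι : Type} [Fintype ι] [DecidableEq ι] (M : Matrix ι ι ℝ) : ℝ≥0∞ :=
  spectralRadius ℂ (M.map Complex.ofReal)

/-- The cycled (1-shift block-circulant) matrix: the (i,j) block equals `M j` if
`i = (j+1) mod N` and `0` otherwise. -/
def cyc (N : ℕ) {n m : ℕ} (M : ℕ → Matrix (Fin n) (Fin m) ℝ) :
    Matrix (Fin N × Fin n) (Fin N × Fin m) ℝ :=
  fun p q => if (p.1 : ℕ) = ((q.1 : ℕ) + 1) % N then M (q.1 : ℕ) p.2 q.2 else 0

/-- Block-diagonal matrix `diag (M 0, …, M (N-1))`. -/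
def bdiag (N : ℕ) {p n : ℕ} (M : ℕ → Matrix (Fin p) (Fin n) ℝ) :
    Matrix (Fin N × Fin p) (Fin N × Fin n) ℝ :=
  fun q r => if q.1 = r.1 then M (q.1 : ℕ) q.2 r.2 else 0

/-- The descending product `A (N-1) * A (N-2) * ⋯ * A 0` (monodromy-type product). -/
def prodDesc {n : ℕ} (A : ℕ → Matrix (Fin n) (Fin n) ℝ) (N : ℕ) : Matrix (Fin n) (Fin n) ℝ :=
  ((List.range N).reverse.map A).prod

/-- State transition product `Φ(j,i) = A (j-1) * ⋯ * A i` for `j > i`, and `Φ(i,i) = 1`. -/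
def stp {n : ℕ} (A : ℕ → Matrix (Fin n) (Fin n) ℝ) (j i : ℕ) : Matrix (Fin n) (Fin n) ℝ :=
  ((List.range' i (j - i)).reverse.map A).prod

/-- Periodic Markov parameter `M_k^{(j)} = C (k+j) * Φ(k+j, k+1) * B k`. -/
def markov {n m p : ℕ} (A : ℕ → Matrix (Fin n) (Fin n) ℝ) (B : ℕ → Matrix (Fin n) (Fin m) ℝ)
    (C : ℕ → Matrix (Fin p) (Fin n) ℝ) (k j : ℕ) : Matrix (Fin p) (Fin m) ℝ :=
  C (k + j) * stp A (k + j) (k + 1) * B k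

/-- Kronecker product `e_i ⊗ w` of the `(i+1)`-th standard unit vector of `ℝ^N` with `w`. -/
def kron {N q : ℕ} (i : Fin N) (w : Fin q → ℝ) : Fin N × Fin q → ℝ :=
  fun p => if p.1 = i then w p.2 else 0

/-- The residue `k mod N` as an element of `Fin N`. -/
def finMod (N : ℕ) (hN : 0 < N) (k : ℕ) : Fin N := ⟨k % N, Nat.mod_lt _ hN⟩


namespace DetCycAux

lemma stp_self {n : ℕ} (A : ℕ → Matrix (Fin n) (Fin n) ℝ) (i : ℕ) : stp A i i = 1 := by
  simp [stp]

lemma stp_succ {n : ℕ} (A : ℕ → Matrix (Fin n) (Fin n) ℝ) {k i : ℕ} (h : k ≤ i) :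
    stp A (i + 1) k = A i * stp A i k := by
  have h1 : i + 1 - k = (i - k) + 1 := by omega
  rw [stp, h1, List.range'_concat, List.reverse_append, List.map_append]
  have h3 : k + (i - k) = i := by omega
  simp [stp, h3]

lemma prodDesc_eq {n : ℕ} (A : ℕ → Matrix (Fin n) (Fin n) ℝ) (N : ℕ) :
    prodDesc A N = stp A N 0 := by
  simp [prodDesc, stp, List.range_eq_range']

/-- The block lower-triangular matrix used for elimination. -/
noncomputable def Wm (N n : ℕ) (A : ℕ → Matrix (Fin n) (Fin n) ℝ) (z : ℂ) :
    Matrix (Fin N × Fin n) (Fin N × Fin n) ℂ :=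
  fun p q => if (q.1 : ℕ) ≤ (p.1 : ℕ) then
      z ^ (N - 1 - ((p.1 : ℕ) - (q.1 : ℕ))) * ((stp A (p.1 : ℕ) (q.1 : ℕ)) p.2 q.2 : ℝ)
    else 0

lemma cond_iff {N : ℕ} (hN : 0 < N) (i j : Fin N) :
    ((i : ℕ) = ((j : ℕ) + 1) % N) ↔ (j : ℕ) = ((i : ℕ) + N - 1) % N := by
  have hi := i.isLt; have hj := j.isLt
  have h1 : ((j : ℕ) + 1) % N = if (j : ℕ) + 1 = N then 0 else (j : ℕ) + 1 := by
    split
    · rename_i h; rw [h, Nat.mod_self]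
    · exact Nat.mod_eq_of_lt (by omega)
  have h2 : ((i : ℕ) + N - 1) % N = if (i : ℕ) = 0 then N - 1 else (i : ℕ) - 1 := by
    split
    · rename_i h; rw [h, Nat.zero_add]; exact Nat.mod_eq_of_lt (by omega)
    · have : (i : ℕ) + N - 1 = ((i : ℕ) - 1) + N := by omega
      rw [this, Nat.add_mod_right, Nat.mod_eq_of_lt (by omega)]
  rw [h1, h2]
  split_ifs <;> omega

lemma mulW_apply {n N : ℕ} (hN : 0 < N) (A : ℕ → Matrix (Fin n) (Fin n) ℝ) (z : ℂ)
    (p q : Fin N × Fin n) :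
    ((z • (1 : Matrix (Fin N × Fin n) (Fin N × Fin n) ℂ) - (cyc N A).map Complex.ofReal)
        * Wm N n A z) p q =
      z * Wm N n A z p q -
        (if (q.1 : ℕ) ≤ ((p.1 : ℕ) + N - 1) % N then
          z ^ (N - 1 - (((p.1 : ℕ) + N - 1) % N - (q.1 : ℕ))) *
            (((A (((p.1 : ℕ) + N - 1) % N) * stp A (((p.1 : ℕ) + N - 1) % N) (q.1 : ℕ))
                p.2 q.2 : ℝ) : ℂ)
        else 0) := by
  rw [Matrix.sub_mul, Matrix.smul_mul, Matrix.one_mul, Matrix.sub_apply, Matrix.smul_apply,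
    smul_eq_mul]
  congr 1
  rw [Matrix.mul_apply, Fintype.sum_prod_type]
  have j0lt : ((p.1 : ℕ) + N - 1) % N < N := Nat.mod_lt _ hN
  set j0 : Fin N := ⟨((p.1 : ℕ) + N - 1) % N, j0lt⟩ with hj0
  have key : ∀ j : Fin N, ((p.1 : ℕ) = ((j : ℕ) + 1) % N) ↔ j = j0 := by
    intro j
    rw [cond_iff hN p.1 j, Fin.ext_iff]
  calc (∑ j : Fin N, ∑ t : Fin n,
        ((cyc N A).map Complex.ofReal) p (j, t) * Wm N n A z (j, t) q)
      = ∑ j : Fin N, (if j = j0 then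
          ∑ t : Fin n, ((A (j : ℕ) p.2 t : ℝ) : ℂ) * Wm N n A z (j, t) q else 0) := by
        refine Finset.sum_congr rfl fun j _ => ?_
        by_cases hc : (p.1 : ℕ) = ((j : ℕ) + 1) % N
        · rw [if_pos ((key j).mp hc)]
          refine Finset.sum_congr rfl fun t _ => ?_
          simp [Matrix.map_apply, cyc, hc]
        · rw [if_neg (fun hj => hc ((key j).mpr hj))]
          refine Finset.sum_eq_zero fun t _ => ?_
          simp [Matrix.map_apply, cyc, hc]
    _ = ∑ t : Fin n, ((A (j0 : ℕ) p.2 t : ℝ) : ℂ) * Wm N n A z (j0, t) q := by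
        rw [Finset.sum_ite_eq' Finset.univ j0]
        simp
    _ = _ := by
        simp only [Wm, hj0]
        split_ifs with h
        · rw [Matrix.mul_apply]
          push_cast
          rw [Finset.mul_sum]
          refine Finset.sum_congr rfl fun t _ => by ring
        · simp


lemma mulW_apply' {n N : ℕ} (hN : 0 < N) (A : ℕ → Matrix (Fin n) (Fin n) ℝ) (z : ℂ)
    (i k : Fin N) (s u : Fin n) :
    ((z • (1 : Matrix (Fin N × Fin n) (Fin N × Fin n) ℂ) - (cyc N A).map Complex.ofReal)
        * Wm N n A z) (i, s) (k, u) =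
      z * Wm N n A z (i, s) (k, u) -
        (if (k : ℕ) ≤ ((i : ℕ) + N - 1) % N then
          z ^ (N - 1 - (((i : ℕ) + N - 1) % N - (k : ℕ))) *
            (((A (((i : ℕ) + N - 1) % N) * stp A (((i : ℕ) + N - 1) % N) (k : ℕ)) s u : ℝ) : ℂ)
        else 0) := mulW_apply hN A z (i, s) (k, u)

lemma det_toSquareBlock_fst {n N : ℕ} (M : Matrix (Fin N × Fin n) (Fin N × Fin n) ℂ)
    (i : Fin N) :
    (M.toSquareBlock Prod.fst i).det = (Matrix.of fun s u => M (i, s) (i, u)).det := by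
  let e : Fin n ≃ {p : Fin N × Fin n // p.1 = i} :=
    { toFun := fun s => ⟨(i, s), rfl⟩
      invFun := fun p => p.1.2
      left_inv := fun s => rfl
      right_inv := fun p => Subtype.ext (Prod.ext p.2.symm rfl) }
  rw [← Matrix.det_submatrix_equiv_self e (M.toSquareBlock Prod.fst i)]
  congr 1

lemma det_toSquareBlock_fst' {n N : ℕ} (M : Matrix (Fin N × Fin n) (Fin N × Fin n) ℂ)
    (i : (Fin N)ᵒᵈ) :
    (M.toSquareBlock (fun p => OrderDual.toDual p.1) i).det =
      (Matrix.of fun s u =>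
        M (OrderDual.ofDual i, s) (OrderDual.ofDual i, u)).det := by
  let e : Fin n ≃ {p : Fin N × Fin n // OrderDual.toDual p.1 = i} :=
    { toFun := fun s => ⟨(OrderDual.ofDual i, s), rfl⟩
      invFun := fun p => p.1.2
      left_inv := fun s => rfl
      right_inv := fun p => Subtype.ext (Prod.ext p.2.symm rfl) }
  rw [← Matrix.det_submatrix_equiv_self e
    (M.toSquareBlock (fun p => OrderDual.toDual p.1) i)]
  congr 1

lemma det_Wm {n N : ℕ} (hN : 0 < N) (A : ℕ → Matrix (Fin n) (Fin n) ℝ) (z : ℂ) :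
    (Wm N n A z).det = ((z ^ (N - 1)) ^ n) ^ N := by
  have hbt : BlockTriangular (Wm N n A z) (fun p => OrderDual.toDual p.1) := by
    intro p q h
    have hlt : p.1 < q.1 := h
    have : ¬ ((q.1 : ℕ) ≤ (p.1 : ℕ)) := not_le.mpr hlt
    simp [Wm, this]
  rw [hbt.det_fintype]
  have hblk : ∀ k : (Fin N)ᵒᵈ,
      ((Wm N n A z).toSquareBlock (fun p => OrderDual.toDual p.1) k).det
        = (z ^ (N - 1)) ^ n := by
    intro k
    rw [det_toSquareBlock_fst']
    have : (Matrix.of fun s u =>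
        Wm N n A z (OrderDual.ofDual k, s) (OrderDual.ofDual k, u)) =
        (z ^ (N - 1)) • (1 : Matrix (Fin n) (Fin n) ℂ) := by
      ext s u
      simp only [Matrix.of_apply, Wm, stp_self, le_refl, if_true, Nat.sub_self, Nat.sub_zero,
        Matrix.smul_apply, smul_eq_mul, Matrix.one_apply, apply_ite Complex.ofReal,
        Complex.ofReal_one, Complex.ofReal_zero, mul_ite, mul_one, mul_zero]
    rw [this, Matrix.det_smul, Matrix.det_one, mul_one, Fintype.card_fin]
  rw [Finset.prod_congr rfl (fun k _ => hblk k), Finset.prod_const]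
  simp

lemma key {n N' : ℕ} (A : ℕ → Matrix (Fin n) (Fin n) ℝ) {z : ℂ} (hz : z ≠ 0) :
    (z • (1 : Matrix (Fin (N' + 1) × Fin n) (Fin (N' + 1) × Fin n) ℂ) -
        (cyc (N' + 1) A).map Complex.ofReal).det =
      (z ^ (N' + 1) • (1 : Matrix (Fin n) (Fin n) ℂ) -
        (prodDesc A (N' + 1)).map Complex.ofReal).det := by
  have hN : 0 < N' + 1 := N'.succ_pos
  set B := z • (1 : Matrix (Fin (N' + 1) × Fin n) (Fin (N' + 1) × Fin n) ℂ) -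
      (cyc (N' + 1) A).map Complex.ofReal with hB
  set W := Wm (N' + 1) n A z with hW
  -- block upper triangularity of B * W
  have hbt : BlockTriangular (B * W) Prod.fst := by
    rintro ⟨i, s⟩ ⟨k, u⟩ h
    have hlt : (k : ℕ) < (i : ℕ) := h
    rw [hB, hW, mulW_apply' hN A z i k s u]
    have hmod : ((i : ℕ) + (N' + 1) - 1) % (N' + 1) = (i : ℕ) - 1 := by
      have h1 : (i : ℕ) + (N' + 1) - 1 = ((i : ℕ) - 1) + (N' + 1) := by omega
      rw [h1, Nat.add_mod_right]
      exact Nat.mod_eq_of_lt (by have := i.isLt; omega)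
    rw [hmod]
    have hq : (k : ℕ) ≤ (i : ℕ) := le_of_lt hlt
    simp only [Wm]
    rw [if_pos hq, if_pos (by omega)]
    have hst : A ((i : ℕ) - 1) * stp A ((i : ℕ) - 1) (k : ℕ)
        = stp A (i : ℕ) (k : ℕ) := by
      have h1 : ((i : ℕ) - 1) + 1 = (i : ℕ) := by omega
      rw [← stp_succ A (by omega : (k : ℕ) ≤ (i : ℕ) - 1), h1]
    rw [hst]
    have hexp : (N' + 1) - 1 - ((i : ℕ) - 1 - (k : ℕ))
        = ((N' + 1) - 1 - ((i : ℕ) - (k : ℕ))) + 1 := by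
      have := i.isLt; omega
    rw [hexp, pow_succ]
    ring
  -- diagonal block at 0
  have hblk0 : (Matrix.of fun s u => (B * W) ((0 : Fin (N' + 1)), s) ((0 : Fin (N' + 1)), u))
      = z ^ (N' + 1) • (1 : Matrix (Fin n) (Fin n) ℂ) -
        (prodDesc A (N' + 1)).map Complex.ofReal := by
    ext s u
    rw [Matrix.of_apply, hB, hW, mulW_apply' hN A z 0 0 s u]
    have h0 : (((0 : Fin (N' + 1)) : ℕ)) = 0 := rfl
    have hmod : ((((0 : Fin (N' + 1)) : ℕ)) + (N' + 1) - 1) % (N' + 1) = N' := by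
      rw [h0, Nat.zero_add]
      exact Nat.mod_eq_of_lt (by omega)
    rw [hmod]
    simp only [Wm, h0]
    rw [if_pos (le_refl 0), if_pos (Nat.zero_le N')]
    have hst : A N' * stp A N' 0 = prodDesc A (N' + 1) := by
      rw [prodDesc_eq, ← stp_succ A (Nat.zero_le N')]
    rw [hst, stp_self]
    have he1 : (N' + 1) - 1 - (0 - 0) = N' := by omega
    have he2 : (N' + 1) - 1 - (N' - 0) = 0 := by omega
    rw [he1, he2, pow_zero, one_mul, Matrix.sub_apply, Matrix.smul_apply, smul_eq_mul,
      Matrix.map_apply]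
    simp only [Matrix.one_apply, apply_ite Complex.ofReal, Complex.ofReal_one,
      Complex.ofReal_zero, mul_ite, mul_one, mul_zero]
    split_ifs <;> ring
  -- diagonal blocks at k ≠ 0
  have hblkk : ∀ k : Fin (N' + 1), k ≠ 0 →
      (Matrix.of fun s u => (B * W) (k, s) (k, u))
        = z ^ (N' + 1) • (1 : Matrix (Fin n) (Fin n) ℂ) := by
    intro k hk
    ext s u
    rw [Matrix.of_apply, hB, hW, mulW_apply' hN A z k k s u]
    have hkpos : 0 < (k : ℕ) := Nat.pos_of_ne_zero (fun h => hk (Fin.ext h))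
    have hmod : ((k : ℕ) + (N' + 1) - 1) % (N' + 1) = (k : ℕ) - 1 := by
      have h1 : (k : ℕ) + (N' + 1) - 1 = ((k : ℕ) - 1) + (N' + 1) := by omega
      rw [h1, Nat.add_mod_right]
      exact Nat.mod_eq_of_lt (by have := k.isLt; omega)
    rw [hmod]
    rw [if_neg (by omega)]
    simp only [Wm]
    rw [if_pos (le_refl (k : ℕ))]
    have he1 : (N' + 1) - 1 - ((k : ℕ) - (k : ℕ)) = N' := by omega
    rw [he1, stp_self, sub_zero, Matrix.smul_apply, smul_eq_mul]
    simp only [Matrix.one_apply, apply_ite Complex.ofReal, Complex.ofReal_one,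
      Complex.ofReal_zero, mul_ite, mul_one, mul_zero]
    split_ifs <;> ring
  -- determinant of B * W
  have hdet1 : (B * W).det =
      (z ^ (N' + 1) • (1 : Matrix (Fin n) (Fin n) ℂ) -
        (prodDesc A (N' + 1)).map Complex.ofReal).det * ((z ^ (N' + 1)) ^ n) ^ N' := by
    rw [hbt.det_fintype, Fin.prod_univ_succ]
    congr 1
    · rw [det_toSquareBlock_fst, hblk0]
    · have : ∀ i : Fin N',
          ((B * W).toSquareBlock Prod.fst i.succ).det = (z ^ (N' + 1)) ^ n := by
        intro i
        rw [det_toSquareBlock_fst, hblkk i.succ (Fin.succ_ne_zero i), Matrix.det_smul,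
          Matrix.det_one, mul_one, Fintype.card_fin]
      rw [Finset.prod_congr rfl (fun i _ => this i), Finset.prod_const]
      simp
  have hdetW : W.det = ((z ^ N') ^ n) ^ (N' + 1) := by
    rw [hW, det_Wm hN A z, Nat.add_sub_cancel]
  have hmain : B.det * W.det = _ := (Matrix.det_mul B W).symm.trans hdet1
  rw [hdetW] at hmain
  have hpow : ((z ^ N') ^ n) ^ (N' + 1) = ((z ^ (N' + 1)) ^ n) ^ N' := by
    rw [← pow_mul, ← pow_mul, ← pow_mul, ← pow_mul]
    congr 1
    ring
  rw [hpow] at hmain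
  exact mul_right_cancel₀ (pow_ne_zero _ (pow_ne_zero _ (pow_ne_zero _ hz))) hmain

end DetCycAux

/-- For the cycled block matrix `Ǎ` built from `A 0, …, A (N-1)`,
`det (z • I - Ǎ) = det (z^N • I - A (N-1) ⋯ A 0)` over `ℂ`. -/
theorem det_cycled_eq_det_monodromy {n N : ℕ} (hN : 1 ≤ N)
    (A : ℕ → Matrix (Fin n) (Fin n) ℝ) (z : ℂ) :
    (z • (1 : Matrix (Fin N × Fin n) (Fin N × Fin n) ℂ) -
        (cyc N A).map Complex.ofReal).det =
      (z ^ N • (1 : Matrix (Fin n) (Fin n) ℂ) -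
        (prodDesc A N).map Complex.ofReal).det := by
  obtain ⟨N', rfl⟩ : ∃ N', N = N' + 1 := ⟨N - 1, by omega⟩
  have hf : Continuous fun w : ℂ =>
      (w • (1 : Matrix (Fin (N' + 1) × Fin n) (Fin (N' + 1) × Fin n) ℂ) -
        (cyc (N' + 1) A).map Complex.ofReal).det :=
    ((continuous_id.smul continuous_const).sub continuous_const).matrix_det
  have hg : Continuous fun w : ℂ =>
      (w ^ (N' + 1) • (1 : Matrix (Fin n) (Fin n) ℂ) -
        (prodDesc A (N' + 1)).map Complex.ofReal).det :=
    (((continuous_pow (N' + 1)).smul continuous_const).sub continuous_const).matrix_det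
  have heq := Continuous.ext_on (dense_compl_singleton (0 : ℂ)) hf hg
    (fun w hw => DetCycAux.key A hw)
  exact congrFun heq z
end

section
/- Let N ≥ 1 and let A_0, …, A_{N−1} be n×n real matrices. Let Ǎ be the Nn×Nn block matrix whose (i,j) block equals A_j if i = (j+1) mod N and 0 otherwise, and let Φ := A_{N−1}A_{N−2}···A_0 be the monodromy matrix. Then the spectral radius of Ǎ equals the N-th root of the spectral radius of Φ, i.e. ρ(Ǎ) = ρ(Φ)^{1/N}. In particular, ρ(Ǎ) < 1 if and only if ρ(Φ) < 1. -/
open Matrix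
open scoped ENNReal NNReal

/-! `Ǎ ^ k` carries block `j` to block `j + k (mod N)` through the ordered product
`A (j+k-1) ⋯ A j` of the `N`-periodic extension of `A`, so `Ǎ ^ N` is block diagonal and its
`j`-th block is the cyclic rotation `(A (j-1) ⋯ A 0) (A (N-1) ⋯ A j)` of `Φ`. Since `XY` and `YX`
have the same nonzero spectrum, every block has spectral radius `ρ(Φ)`, and the spectral mapping
theorem for powers gives `ρ(Ǎ) ^ N = ρ(Ǎ ^ N) = ρ(Φ)`. -/

section spectralRadius

variable {𝕜 A : Type*} [NormedField 𝕜] [Ring A] [Algebra 𝕜 A]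

theorem spectralRadius_pow [IsAlgClosed 𝕜] (a : A) {k : ℕ} (hk : 0 < k) :
    spectralRadius 𝕜 (a ^ k) = spectralRadius 𝕜 a ^ k := by
  simp only [spectralRadius, spectrum.map_pow_of_pos a hk, iSup_image, nnnorm_pow,
    ENNReal.coe_pow, ENNReal.iSup₂_pow_of_ne_zero _ hk.ne']

theorem spectralRadius_eq_biSup_insert_zero (a : A) :
    spectralRadius 𝕜 a = ⨆ x ∈ insert 0 (spectrum 𝕜 a), (‖x‖₊ : ℝ≥0∞) := by
  rw [iSup_insert, nnnorm_zero, ENNReal.coe_zero, zero_max, spectralRadius]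

theorem spectralRadius_mul_comm (a b : A) :
    spectralRadius 𝕜 (a * b) = spectralRadius 𝕜 (b * a) := by
  rw [spectralRadius_eq_biSup_insert_zero, spectralRadius_eq_biSup_insert_zero,
    ← Set.insert_sdiff_singleton, spectrum.nonzero_mul_comm, Set.insert_sdiff_singleton]

end spectralRadius

theorem Matrix.spectrum_blockDiagonal {K m o : Type*} [Field K] [Fintype m] [DecidableEq m]
    [Fintype o] [DecidableEq o] (B : o → Matrix m m K) :
    spectrum K (blockDiagonal B) = ⋃ i, spectrum K (B i) := by
  ext μ
  have hsub : algebraMap K _ μ - blockDiagonal B =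
      blockDiagonal (fun i => algebraMap K _ μ - B i) := by
    rw [Algebra.algebraMap_eq_smul_one, Algebra.algebraMap_eq_smul_one, ← blockDiagonal_one,
      ← blockDiagonal_smul, ← blockDiagonal_sub]
    rfl
  simp [spectrum.mem_iff, hsub, isUnit_iff_isUnit_det, det_blockDiagonal,
    Finset.prod_eq_zero_iff]

section specRad

variable {ι : Type} [Fintype ι] [DecidableEq ι]

theorem specRad_eq_spectralRadius_mapMatrix (M : Matrix ι ι ℝ) :
    specRad M = spectralRadius ℂ (Complex.ofRealHom.mapMatrix M) := rfl

theorem specRad_pow (M : Matrix ι ι ℝ) {k : ℕ} (hk : 0 < k) :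
    specRad (M ^ k) = specRad M ^ k := by
  rw [specRad_eq_spectralRadius_mapMatrix, map_pow, spectralRadius_pow _ hk]
  rfl

theorem specRad_mul_comm (M M' : Matrix ι ι ℝ) : specRad (M * M') = specRad (M' * M) := by
  simp only [specRad_eq_spectralRadius_mapMatrix, map_mul, spectralRadius_mul_comm]

end specRad

theorem bdiag_map_ofReal {N p : ℕ} (M : ℕ → Matrix (Fin p) (Fin p) ℝ) :
    (bdiag N M).map Complex.ofReal = reindex (Equiv.prodComm _ _) (Equiv.prodComm _ _)
      (blockDiagonal fun j : Fin N => (M j).map Complex.ofReal) := by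
  ext ⟨i, k⟩ ⟨j, l⟩
  by_cases h : i = j <;> simp [bdiag, blockDiagonal_apply, h]

theorem specRad_bdiag {N p : ℕ} (M : ℕ → Matrix (Fin p) (Fin p) ℝ) :
    specRad (bdiag N M) = ⨆ j : Fin N, specRad (M j) := by
  rw [specRad, bdiag_map_ofReal, spectralRadius, ← coe_reindexAlgEquiv ℂ ℂ,
    AlgEquiv.spectrum_eq, spectrum_blockDiagonal, iSup_iUnion]
  rfl

section descProd

variable {M : Type*} [Monoid M]

def descProd (a : ℕ → M) (j : ℕ) : ℕ → M
  | 0 => 1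
  | k + 1 => a (j + k) * descProd a j k

theorem descProd_add (a : ℕ → M) (j k l : ℕ) :
    descProd a j (k + l) = descProd a (j + k) l * descProd a j k := by
  induction l with
  | zero => simp [descProd]
  | succ l ih => rw [← add_assoc, descProd, descProd, ih, add_assoc, mul_assoc]

theorem descProd_congr {a b : ℕ → M} {j j' k : ℕ} (h : ∀ i < k, a (j + i) = b (j' + i)) :
    descProd a j k = descProd b j' k := by
  induction k with
  | zero => rfl
  | succ k ih =>
    rw [descProd, descProd, h k k.lt_succ_self, ih fun i hi => h i (hi.trans k.lt_succ_self)]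

variable (a : ℕ → M) {N j : ℕ}

theorem descProd_zero_eq_mul (hj : j ≤ N) :
    descProd a 0 N = descProd a j (N - j) * descProd a 0 j := by
  simpa [Nat.add_sub_cancel' hj] using descProd_add a 0 j (N - j)

theorem descProd_mod_eq_mul (hj : j ≤ N) :
    descProd (fun t => a (t % N)) j N = descProd a 0 j * descProd a j (N - j) := by
  rw [show descProd (fun t => a (t % N)) j N = descProd (fun t => a (t % N)) j ((N - j) + j) by
    rw [Nat.sub_add_cancel hj], descProd_add, Nat.add_sub_cancel' hj]
  congr 1 <;> refine descProd_congr fun i hi => ?_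
  · rw [Nat.add_mod_left, Nat.mod_eq_of_lt (by omega), zero_add]
  · rw [Nat.mod_eq_of_lt (by omega)]

end descProd

theorem prodDesc_eq_descProd {n : ℕ} (A : ℕ → Matrix (Fin n) (Fin n) ℝ) (N : ℕ) :
    prodDesc A N = descProd A 0 N := by
  induction N with
  | zero => rfl
  | succ N ih =>
    rw [prodDesc, List.range_succ, List.reverse_append]
    simp [descProd, ← ih, prodDesc]

def blockShift (N k : ℕ) {n m : ℕ} (M : ℕ → Matrix (Fin n) (Fin m) ℝ) :
    Matrix (Fin N × Fin n) (Fin N × Fin m) ℝ :=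
  fun p q => if (p.1 : ℕ) = ((q.1 : ℕ) + k) % N then M (q.1 : ℕ) p.2 q.2 else 0

theorem cyc_eq_blockShift (N : ℕ) {n m : ℕ} (M : ℕ → Matrix (Fin n) (Fin m) ℝ) :
    cyc N M = blockShift N 1 M := rfl

theorem blockShift_zero_one (N n : ℕ) :
    blockShift N 0 (fun _ => (1 : Matrix (Fin n) (Fin n) ℝ)) = 1 := by
  ext ⟨i, k⟩ ⟨j, l⟩
  simp [blockShift, one_apply, Nat.mod_eq_of_lt j.isLt, Fin.val_eq_val, ite_and]

theorem blockShift_self (N : ℕ) {n m : ℕ} (M : ℕ → Matrix (Fin n) (Fin m) ℝ) :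
    blockShift N N M = bdiag N M := by
  ext ⟨i, k⟩ ⟨j, l⟩
  by_cases h : i = j <;> simp [blockShift, bdiag, h, Nat.mod_eq_of_lt j.isLt, Fin.val_eq_val]

theorem blockShift_mul_blockShift (N k l : ℕ) {n m o : ℕ}
    (M : ℕ → Matrix (Fin n) (Fin m) ℝ) (M' : ℕ → Matrix (Fin m) (Fin o) ℝ) :
    blockShift N k M * blockShift N l M' =
      blockShift N (k + l) (fun j => M ((j + l) % N) * M' j) := by
  ext ⟨i, r⟩ ⟨j, t⟩
  let mid : Fin N := ⟨(j + l) % N, Nat.mod_lt _ j.pos⟩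
  rw [mul_apply, Fintype.sum_prod_type, Finset.sum_eq_single mid]
  · have hmod : ((j + l) % N + k) % N = (j + (k + l)) % N := by
      rw [Nat.mod_add_mod, add_right_comm, add_assoc]
    by_cases h : (i : ℕ) = (j + (k + l)) % N
    · simp [blockShift, mid, hmod, h, mul_apply]
    · simp [blockShift, mid, hmod, h]
  · intro b _ hb
    refine Finset.sum_eq_zero fun s _ => ?_
    have : (b : ℕ) ≠ (j + l) % N := fun h => hb (Fin.ext h)
    simp [blockShift, this]
  · simp

theorem cyc_pow (N : ℕ) {n : ℕ} (A : ℕ → Matrix (Fin n) (Fin n) ℝ) (k : ℕ) :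
    cyc N A ^ k = blockShift N k (fun j => descProd (fun t => A (t % N)) j k) := by
  induction k with
  | zero => exact (blockShift_zero_one N n).symm
  | succ k ih =>
    rw [pow_succ', ih, cyc_eq_blockShift, blockShift_mul_blockShift, add_comm 1 k]
    rfl

/-- The spectral radius of the cycled block matrix `Ǎ` equals the `N`-th
root of the spectral radius of the monodromy matrix `Φ = A (N-1) ⋯ A 0`; in particular
`ρ(Ǎ) < 1 ↔ ρ(Φ) < 1`. -/
theorem specRad_cycled {n N : ℕ} (hN : 1 ≤ N) (A : ℕ → Matrix (Fin n) (Fin n) ℝ) :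
    specRad (cyc N A) = specRad (prodDesc A N) ^ (1 / (N : ℝ)) ∧
      (specRad (cyc N A) < 1 ↔ specRad (prodDesc A N) < 1) := by
  have hpow : specRad (cyc N A) ^ N = specRad (prodDesc A N) := by
    have : Nonempty (Fin N) := ⟨⟨0, hN⟩⟩
    rw [← specRad_pow _ hN, cyc_pow, blockShift_self, specRad_bdiag]
    refine (iSup_congr fun j => ?_).trans iSup_const
    rw [descProd_mod_eq_mul A j.isLt.le, prodDesc_eq_descProd, descProd_zero_eq_mul A j.isLt.le,
      specRad_mul_comm]
  constructor
  · rw [← hpow, one_div, ENNReal.pow_rpow_inv_natCast (by omega)]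
  · rw [← hpow, pow_lt_one_iff (by omega)]
end

section
/- Fix N ≥ 1 and an N-periodic family of real matrices A_k ∈ ℝ^{n×n}, B_k ∈ ℝ^{n×m}, C_k ∈ ℝ^{p×n}, D_k ∈ ℝ^{p×m} (all subscripts taken mod N), with cycled matrices Ǎ, B̌, Č, Ď. Suppose x : ℕ → ℝ^n, u : ℕ → ℝ^m, y : ℕ → ℝ^p satisfy x(k+1) = A_k x(k) + B_k u(k) and y(k) = C_k x(k) + D_k u(k) for all k. Define the cycled input ǔ(k) := e_{k mod N} ⊗ u(k) ∈ ℝ^{Nm}, where e_i is the (i+1)-th standard unit vector of ℝ^N, and let x̌ : ℕ → ℝ^{Nn} satisfy x̌(0) = e_0 ⊗ x(0) and x̌(k+1) = Ǎ x̌(k) + B̌ ǔ(k), with y̌(k) := Č x̌(k) + Ď ǔ(k). Then for all k: x̌(k) = e_{k mod N} ⊗ x(k) and y̌(k) = e_{k mod N} ⊗ y(k); in particular the ((k mod N)+1)-th block of y̌(k) equals y(k) and all other blocks of y̌(k) are zero. -/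
open Matrix
open scoped ENNReal NNReal

lemma kron_add' {N q : ℕ} (i : Fin N) (v w : Fin q → ℝ) :
    kron i v + kron i w = kron i (v + w) := by
  funext p; simp [kron]; split <;> simp

lemma cyc_mulVec' {N n m : ℕ} (hN : 0 < N) (M : ℕ → Matrix (Fin n) (Fin m) ℝ)
    (i : Fin N) (v : Fin m → ℝ) :
    (cyc N M).mulVec (kron i v) = kron (finMod N hN ((i : ℕ) + 1)) ((M i).mulVec v) := by
  funext q
  simp only [mulVec, dotProduct, Fintype.sum_prod_type, cyc, kron, finMod,
    ite_mul, zero_mul, mul_ite, mul_zero]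
  rw [Finset.sum_eq_single i]
  · by_cases h : (q.1 : ℕ) = ((i : ℕ) + 1) % N
    · simp [h, Fin.ext_iff]
    · simp [h, Fin.ext_iff]
  · intro b _ hb; simp [hb]
  · simp

lemma bdiag_mulVec' {N n m : ℕ} (M : ℕ → Matrix (Fin n) (Fin m) ℝ)
    (i : Fin N) (v : Fin m → ℝ) :
    (bdiag N M).mulVec (kron i v) = kron i ((M i).mulVec v) := by
  funext q
  simp only [mulVec, dotProduct, Fintype.sum_prod_type, bdiag, kron,
    ite_mul, zero_mul, mul_ite, mul_zero]
  rw [Finset.sum_eq_single i]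
  · by_cases h : q.1 = i <;> simp [h]
  · intro b _ hb; simp [hb]
  · simp

/-- Equivalence of the LPTV system and its cycled reformulation:
the cycled state satisfies `x̌(k) = e_{k mod N} ⊗ x(k)` and the cycled output satisfies
`y̌(k) = e_{k mod N} ⊗ y(k)`; in particular the `(k mod N)`-th block of `y̌(k)` equals
`y(k)` and all other blocks vanish. -/
theorem cycled_system_equiv {n m p N : ℕ} (hN : 1 ≤ N)
    (A : ℕ → Matrix (Fin n) (Fin n) ℝ) (B : ℕ → Matrix (Fin n) (Fin m) ℝ)
    (C : ℕ → Matrix (Fin p) (Fin n) ℝ) (D : ℕ → Matrix (Fin p) (Fin m) ℝ)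
    (hA : ∀ k, A k = A (k % N)) (hB : ∀ k, B k = B (k % N))
    (hC : ∀ k, C k = C (k % N)) (hD : ∀ k, D k = D (k % N))
    (x : ℕ → Fin n → ℝ) (u : ℕ → Fin m → ℝ) (y : ℕ → Fin p → ℝ)
    (hx : ∀ k, x (k + 1) = (A k).mulVec (x k) + (B k).mulVec (u k))
    (hy : ∀ k, y k = (C k).mulVec (x k) + (D k).mulVec (u k))
    (xc : ℕ → Fin N × Fin n → ℝ) (yc : ℕ → Fin N × Fin p → ℝ)
    (hxc0 : xc 0 = kron (finMod N hN 0) (x 0))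
    (hxc : ∀ k, xc (k + 1) =
      (cyc N A).mulVec (xc k) + (cyc N B).mulVec (kron (finMod N hN k) (u k)))
    (hyc : ∀ k, yc k =
      (bdiag N C).mulVec (xc k) + (bdiag N D).mulVec (kron (finMod N hN k) (u k))) :
    ∀ k, xc k = kron (finMod N hN k) (x k) ∧ yc k = kron (finMod N hN k) (y k) ∧
      (∀ t, yc k (finMod N hN k, t) = y k t) ∧
      (∀ (i : Fin N) (t : Fin p), i ≠ finMod N hN k → yc k (i, t) = 0) := by
  have hN0 : 0 < N := hN
  have hxk : ∀ k, xc k = kron (finMod N hN k) (x k) := by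
    intro k
    induction k with
    | zero => exact hxc0
    | succ k ih =>
      rw [hxc k, ih, cyc_mulVec' hN0, cyc_mulVec' hN0, kron_add']
      have hc : (((finMod N hN k : Fin N) : ℕ) + 1) % N = (k + 1) % N := by
        simp [finMod, Nat.mod_add_mod]
      have : finMod N hN (((finMod N hN k : Fin N) : ℕ) + 1) = finMod N hN (k + 1) := by
        simp [finMod, Fin.ext_iff, hc]
      rw [this, hx k]

      have hv : ((finMod N hN k : Fin N) : ℕ) = k % N := rfl
      rw [hv, ← hA, ← hB]
  have hyk : ∀ k, yc k = kron (finMod N hN k) (y k) := by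
    intro k
    rw [hyc k, hxk k, bdiag_mulVec', bdiag_mulVec', kron_add', hy k]

    have hv : ((finMod N hN k : Fin N) : ℕ) = k % N := rfl
    rw [hv, ← hC, ← hD]
  intro k
  refine ⟨hxk k, hyk k, ?_, ?_⟩
  · intro t; rw [hyk k]; simp [kron]
  · intro i t hi; rw [hyk k]; simp [kron, hi]
end

section
/- Let A ∈ ℝ^{n×n}, B ∈ ℝ^{n×m}, C ∈ ℝ^{m×n}, and let r ≥ 1. Suppose C A^j B = 0 for all j with 0 ≤ j ≤ r−2, and that C A^{r−1} B is invertible. Suppose x : ℕ → ℝ^n, u : ℕ → ℝ^m, y : ℕ → ℝ^m satisfy x(k+1) = A x(k) + B u(k) and y(k) = C x(k) for all k. Define ζ : ℕ → ℝ^n and û : ℕ → ℝ^m by ζ(0) = x(0), ζ(k+1) = (A − B (C A^{r−1} B)⁻¹ C A^r) ζ(k) + B (C A^{r−1} B)⁻¹ y(k+r), and û(k) = −(C A^{r−1} B)⁻¹ C A^r ζ(k) + (C A^{r−1} B)⁻¹ y(k+r). Then ζ(k) = x(k) and û(k) = u(k) for all k. -/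
open Matrix
open scoped ENNReal NNReal

/-- LTI `r`-step-delayed inverse: with matched initial condition, the
delayed inverse system reconstructs the state and input exactly. -/
theorem lti_inverse_relative_degree_r {n m : ℕ}
    (A : Matrix (Fin n) (Fin n) ℝ) (B : Matrix (Fin n) (Fin m) ℝ)
    (C : Matrix (Fin m) (Fin n) ℝ) (r : ℕ) (hr : 1 ≤ r)
    (hCAB : ∀ j : ℕ, j + 2 ≤ r → C * A ^ j * B = 0)
    (hInv : IsUnit (C * A ^ (r - 1) * B).det)
    (x : ℕ → Fin n → ℝ) (u y : ℕ → Fin m → ℝ)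
    (hx : ∀ k, x (k + 1) = A.mulVec (x k) + B.mulVec (u k))
    (hy : ∀ k, y k = C.mulVec (x k))
    (ζ : ℕ → Fin n → ℝ) (uh : ℕ → Fin m → ℝ)
    (hζ0 : ζ 0 = x 0)
    (hζ : ∀ k, ζ (k + 1) =
      (A - B * (C * A ^ (r - 1) * B)⁻¹ * (C * A ^ r)).mulVec (ζ k) +
        (B * (C * A ^ (r - 1) * B)⁻¹).mulVec (y (k + r)))
    (huh : ∀ k, uh k =
      -(((C * A ^ (r - 1) * B)⁻¹ * (C * A ^ r)).mulVec (ζ k)) +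
        ((C * A ^ (r - 1) * B)⁻¹).mulVec (y (k + r))) :
    ∀ k, ζ k = x k ∧ uh k = u k := by
  set D := C * A ^ (r - 1) * B with hD
  have key : ∀ k, y (k + r) = (C * A ^ r).mulVec (x k) + D.mulVec (u k) := by
    intro k
    have aux : ∀ j, 1 ≤ j → j ≤ r →
        (C * A ^ (r - j)).mulVec (x (k + j)) =
          (C * A ^ r).mulVec (x k) + D.mulVec (u k) := by
      intro j hj1 hjr
      induction j with
      | zero => omega
      | succ j ih =>
        rcases Nat.eq_or_lt_of_le hj1 with h1 | h1
        · have hj0 : j = 0 := by omega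
          subst hj0
          simp only [Nat.zero_add]
          rw [hx, Matrix.mulVec_add, Matrix.mulVec_mulVec, Matrix.mulVec_mulVec,
            Matrix.mul_assoc, ← pow_succ, show r - 1 + 1 = r from by omega, hD]
        · have hj : 1 ≤ j := by omega
          have hjr' : j ≤ r := by omega
          have hz : C * A ^ (r - (j + 1)) * B = 0 := hCAB _ (by omega)
          rw [show k + (j + 1) = (k + j) + 1 from by ring, hx, Matrix.mulVec_add,
            Matrix.mulVec_mulVec, Matrix.mulVec_mulVec, hz, Matrix.zero_mulVec, add_zero,
            Matrix.mul_assoc C, ← pow_succ,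
            show r - (j + 1) + 1 = r - j from by omega, ih hj hjr']
    have h := aux r hr le_rfl
    rw [Nat.sub_self, pow_zero, Matrix.mul_one] at h
    rw [hy, h]
  have hDinv : D⁻¹ * D = 1 := Matrix.nonsing_inv_mul D hInv
  intro k
  induction k with
  | zero =>
    refine ⟨hζ0, ?_⟩
    rw [huh, hζ0, key, Matrix.mulVec_add]
    simp only [Matrix.mulVec_mulVec]
    rw [hDinv, Matrix.one_mulVec]
    abel
  | succ k ih =>
    have hζk : ζ (k + 1) = x (k + 1) := by
      rw [hζ, ih.1, key, hx, Matrix.sub_mulVec, Matrix.mulVec_add]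
      simp only [Matrix.mulVec_mulVec]
      rw [show B * D⁻¹ * D = B from by rw [Matrix.mul_assoc, hDinv, Matrix.mul_one]]
      abel
    refine ⟨hζk, ?_⟩
    rw [huh, hζk, key, Matrix.mulVec_add]
    simp only [Matrix.mulVec_mulVec]
    rw [hDinv, Matrix.one_mulVec]
    abel
end

section
/- Fix N ≥ 1 and an N-periodic family of real matrices A_k ∈ ℝ^{n×n}, B_k ∈ ℝ^{n×m}, C_k ∈ ℝ^{m×n}, D_k ∈ ℝ^{m×m}, with every D_k invertible, and cycled matrices Ǎ, B̌, Č, Ď. Define Γ_k := A_k − B_k D_k⁻¹ C_k and Φ_inv := Γ_{N−1} Γ_{N−2} ··· Γ_0. Then ρ(Φ_inv) < 1 if and only if ρ(Ǎ − B̌ Ď⁻¹ Č) < 1, where ρ denotes the spectral radius. -/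
open Matrix
open scoped ENNReal NNReal

/-!
For `μ ≠ 0`, the eigenvalue equation of the cycled matrix of `G₀, …, G_{N-1}` reads
`G_j v_j = μ v_{j+1 mod N}` blockwise. It forces `v_j = μ⁻ʲ G_{j-1} ⋯ G₀ v₀` and
`G_{N-1} ⋯ G₀ v₀ = μᴺ v₀` with `v₀ ≠ 0`, and conversely any eigenvector `v₀` of the monodromy
for `μᴺ` extends to an eigenvector of the cycled matrix by this formula. So the nonzero eigenvalues
of the cycled matrix are exactly the `N`-th roots of the nonzero eigenvalues of the monodromy,
and `|μ| < 1 ↔ |μᴺ| < 1`. Finally `Ǎ - B̌ Ď⁻¹ Č` is the cycled matrix of the `Γ_k`, because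
block-diagonal factors multiply into the blocks of a cycled matrix.
-/

open Matrix

section Spectrum

variable {𝕜 ι κ : Type*} [Fintype ι] [DecidableEq ι] [Fintype κ] [DecidableEq κ]

theorem Matrix.mem_spectrum_iff_exists_mulVec_eq_smul [Field 𝕜] (M : Matrix ι ι 𝕜) (μ : 𝕜) :
    μ ∈ spectrum 𝕜 M ↔ ∃ v ≠ 0, M *ᵥ v = μ • v := by
  rw [← spectrum_toLin', ← Module.End.hasEigenvalue_iff_mem_spectrum]
  simp [Module.End.hasEigenvalue_iff, Submodule.ne_bot_iff, and_comm]

theorem Matrix.spectralRadius_lt_iff [NormedField 𝕜] (M : Matrix ι ι 𝕜) {r : ℝ≥0∞}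
    (hr : 0 < r) : spectralRadius 𝕜 M < r ↔ ∀ μ ∈ spectrum 𝕜 M, (‖μ‖₊ : ℝ≥0∞) < r := by
  have hfin := M.finite_spectrum
  rw [spectralRadius, ← hfin.coe_toFinset]
  simp_rw [Finset.mem_coe, ← Finset.sup_eq_iSup, Finset.sup_lt_iff hr]

theorem Matrix.spectralRadius_lt_one_iff_of_pow_mem_iff [NormedField 𝕜] [IsAlgClosed 𝕜]
    {a : Matrix ι ι 𝕜} {b : Matrix κ κ 𝕜} {N : ℕ} (hN : N ≠ 0)
    (h : ∀ μ : 𝕜, μ ≠ 0 → (μ ∈ spectrum 𝕜 a ↔ μ ^ N ∈ spectrum 𝕜 b)) :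
    spectralRadius 𝕜 b < 1 ↔ spectralRadius 𝕜 a < 1 := by
  simp_rw [spectralRadius_lt_iff _ one_pos, ENNReal.coe_lt_one_iff]
  constructor
  · intro hb μ hμ
    rcases eq_or_ne μ 0 with rfl | hμ0
    · simp
    · simpa [pow_lt_one_iff_of_nonneg, hN] using hb _ ((h μ hμ0).1 hμ)
  · intro ha ν hν
    rcases eq_or_ne ν 0 with rfl | hν0
    · simp
    obtain ⟨μ, rfl⟩ := IsAlgClosed.exists_pow_nat_eq ν (Nat.pos_of_ne_zero hN)
    have hμ0 : μ ≠ 0 := by rintro rfl; simp [hN] at hν0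
    simpa [pow_lt_one_iff_of_nonneg, hN] using ha _ ((h μ hμ0).2 hν)

end Spectrum

section ProdRangeDesc

variable {M : Type*} [Monoid M]

def prodRangeDesc (G : ℕ → M) (k : ℕ) : M :=
  ((List.range k).reverse.map G).prod

@[simp]
theorem prodRangeDesc_zero (G : ℕ → M) : prodRangeDesc G 0 = 1 := rfl

theorem prodRangeDesc_succ (G : ℕ → M) (k : ℕ) :
    prodRangeDesc G (k + 1) = G k * prodRangeDesc G k := by
  simp [prodRangeDesc, List.range_succ]

theorem map_prodRangeDesc {M' F : Type*} [Monoid M'] [FunLike F M M'] [MonoidHomClass F M M']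
    (f : F) (G : ℕ → M) (k : ℕ) : f (prodRangeDesc G k) = prodRangeDesc (f ∘ G) k := by
  rw [prodRangeDesc, map_list_prod, List.map_map, prodRangeDesc]

theorem prodDesc_eq_prodRangeDesc {n : ℕ} (A : ℕ → Matrix (Fin n) (Fin n) ℝ) (N : ℕ) :
    prodDesc A N = prodRangeDesc A N := rfl

end ProdRangeDesc

section CycleMatrix

def cycleMatrix {R : Type*} [Zero R] (N : ℕ) {n m : ℕ} (M : ℕ → Matrix (Fin n) (Fin m) R) :
    Matrix (Fin N × Fin n) (Fin N × Fin m) R :=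
  fun p q => if (p.1 : ℕ) = ((q.1 : ℕ) + 1) % N then M q.1 p.2 q.2 else 0

theorem cyc_eq_cycleMatrix (N : ℕ) {n m : ℕ} (M : ℕ → Matrix (Fin n) (Fin m) ℝ) :
    cyc N M = cycleMatrix N M := rfl

theorem cycleMatrix_map {R S : Type*} [Zero R] [Zero S] (N : ℕ) {n m : ℕ}
    (M : ℕ → Matrix (Fin n) (Fin m) R) {f : R → S} (hf : f 0 = 0) :
    (cycleMatrix N M).map f = cycleMatrix N (fun k => (M k).map f) := by
  ext p q
  simp [cycleMatrix, apply_ite f, hf]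

open Fin.NatCast

variable {K : Type*} [Field K] {N n : ℕ} [NeZero N] (G : ℕ → Matrix (Fin n) (Fin n) K)

theorem Fin.val_eq_add_one_mod_iff (i j : Fin N) : (i : ℕ) = ((j : ℕ) + 1) % N ↔ j = i - 1 := by
  rw [eq_sub_iff_add_eq, eq_comm, Fin.ext_iff, Fin.val_add, Fin.val_one', Nat.add_mod_mod]

theorem cycleMatrix_mulVec_apply (v : Fin N × Fin n → K) (i : Fin N) (x : Fin n) :
    (cycleMatrix N G *ᵥ v) (i, x) = (G ↑(i - 1) *ᵥ Function.curry v (i - 1)) x := by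
  simp only [cycleMatrix, mulVec, dotProduct, Fintype.sum_prod_type, ite_mul, zero_mul,
    Fin.val_eq_add_one_mod_iff]
  simp [Function.curry]

theorem cycleMatrix_mulVec_eq_smul_iff (v : Fin N × Fin n → K) (μ : K) :
    cycleMatrix N G *ᵥ v = μ • v ↔
      ∀ j : Fin N, G j *ᵥ Function.curry v j = μ • Function.curry v (j + 1) := by
  constructor
  · intro h j
    funext x
    simpa [cycleMatrix_mulVec_apply] using congrFun h (j + 1, x)
  · intro h
    funext ⟨i, x⟩
    simpa [cycleMatrix_mulVec_apply] using congrFun (h (i - 1)) x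

theorem curry_natCast_eq_inv_pow_smul_prodRangeDesc_mulVec {v : Fin N × Fin n → K} {μ : K}
    (hμ : μ ≠ 0)
    (hv : ∀ j : Fin N, G j *ᵥ Function.curry v j = μ • Function.curry v (j + 1)) :
    ∀ k ≤ N,
      Function.curry v (k : Fin N) = (μ ^ k)⁻¹ • prodRangeDesc G k *ᵥ Function.curry v 0 := by
  intro k hk
  induction k with
  | zero => simp
  | succ k ih =>
    have hblock := hv (k : Fin N)
    rw [Fin.val_cast_of_lt (by omega), ih (by omega), mulVec_smul] at hblock
    rw [Nat.cast_succ, prodRangeDesc_succ, ← mulVec_mulVec, pow_succ, _root_.mul_inv_rev,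
      ← smul_smul, hblock, inv_smul_smul₀ hμ]

theorem mem_spectrum_cycleMatrix_iff {μ : K} (hμ : μ ≠ 0) :
    μ ∈ spectrum K (cycleMatrix N G) ↔ μ ^ N ∈ spectrum K (prodRangeDesc G N) := by
  simp_rw [mem_spectrum_iff_exists_mulVec_eq_smul, cycleMatrix_mulVec_eq_smul_iff]
  constructor
  · rintro ⟨v, hv0, hv⟩
    have hblocks := curry_natCast_eq_inv_pow_smul_prodRangeDesc_mulVec G hμ hv
    refine ⟨Function.curry v 0, fun h0 => hv0 ?_, ?_⟩
    · funext ⟨j, x⟩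
      simpa [h0] using congrFun (hblocks j j.isLt.le) x
    · have hN := hblocks N le_rfl
      rw [Fin.natCast_self, eq_inv_smul_iff₀ (pow_ne_zero N hμ)] at hN
      exact hN.symm
  · rintro ⟨w, hw0, hw⟩
    set u : ℕ → Fin n → K := fun k => (μ ^ k)⁻¹ • prodRangeDesc G k *ᵥ w
    have hstep : ∀ k, G k *ᵥ u k = μ • u (k + 1) := by
      intro k
      rw [mulVec_smul, mulVec_mulVec, ← prodRangeDesc_succ, smul_smul, pow_succ,
        _root_.mul_inv_rev, ← mul_assoc, mul_inv_cancel₀ hμ, one_mul]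
    refine ⟨Function.uncurry fun j : Fin N => u j, fun h0 => hw0 ?_, fun j => ?_⟩
    · funext x
      simpa [u] using congrFun h0 (0, x)
    · have hwrap : u ((j + 1 : Fin N) : ℕ) = u (j + 1) := by
        rcases Nat.lt_or_ge ((j : ℕ) + 1) N with hlt | hge
        · rw [Fin.val_add_one_of_lt' hlt]
        · have heq : (j : ℕ) + 1 = N := by omega
          have hj : j + 1 = 0 := by
            rw [← Fin.cast_val_eq_self j, ← Nat.cast_add_one, heq, Fin.natCast_self]
          rw [hj, heq]
          simp [u, hw, smul_smul, hμ]
      simpa [hwrap] using hstep j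

end CycleMatrix

section BlockDiagonal

variable {N : ℕ}

theorem bdiag_mul_bdiag {a b c : ℕ} (M : ℕ → Matrix (Fin a) (Fin b) ℝ)
    (E : ℕ → Matrix (Fin b) (Fin c) ℝ) :
    bdiag N M * bdiag N E = bdiag N (fun k => M k * E k) := by
  ext ⟨i, x⟩ ⟨j, y⟩
  simp only [bdiag, mul_apply, Fintype.sum_prod_type, ite_mul, mul_ite, zero_mul, mul_zero]
  rw [Finset.sum_comm]
  split_ifs with h <;> simp [h]

theorem cyc_mul_bdiag {a b c : ℕ} (M : ℕ → Matrix (Fin a) (Fin b) ℝ)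
    (E : ℕ → Matrix (Fin b) (Fin c) ℝ) :
    cyc N M * bdiag N E = cyc N (fun k => M k * E k) := by
  ext ⟨i, x⟩ ⟨j, y⟩
  simp only [cyc, bdiag, mul_apply, Fintype.sum_prod_type, ite_mul, mul_ite, zero_mul, mul_zero]
  rw [Finset.sum_comm]
  simp

theorem bdiag_one {m : ℕ} : bdiag N (fun _ => (1 : Matrix (Fin m) (Fin m) ℝ)) = 1 := by
  ext ⟨i, x⟩ ⟨j, y⟩
  by_cases h : i = j <;> simp [bdiag, one_apply, h]

theorem inv_bdiag {m : ℕ} (D : ℕ → Matrix (Fin m) (Fin m) ℝ) (hD : ∀ k, IsUnit (D k).det) :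
    (bdiag N D)⁻¹ = bdiag N (fun k => (D k)⁻¹) := by
  apply inv_eq_right_inv
  simp_rw [bdiag_mul_bdiag, mul_nonsing_inv _ (hD _), bdiag_one]

theorem cyc_sub_cyc {n m : ℕ} (M E : ℕ → Matrix (Fin n) (Fin m) ℝ) :
    cyc N M - cyc N E = cyc N (fun k => M k - E k) := by
  ext p q
  simp only [Matrix.sub_apply, cyc]
  split_ifs <;> simp

end BlockDiagonal

/-- With `Γ_k = A_k - B_k D_k⁻¹ C_k` and
`Φ_inv = Γ_{N-1} ⋯ Γ_0`, one has `ρ(Φ_inv) < 1 ↔ ρ(Ǎ - B̌ Ď⁻¹ Č) < 1`. -/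
theorem specRad_monodromy_iff_cycled {n m N : ℕ} (hN : 1 ≤ N)
    (A : ℕ → Matrix (Fin n) (Fin n) ℝ) (B : ℕ → Matrix (Fin n) (Fin m) ℝ)
    (C : ℕ → Matrix (Fin m) (Fin n) ℝ) (D : ℕ → Matrix (Fin m) (Fin m) ℝ)
    (hDinv : ∀ k, IsUnit (D k).det) :
    specRad (prodDesc (fun k => A k - B k * (D k)⁻¹ * C k) N) < 1 ↔
      specRad (cyc N A - cyc N B * (bdiag N D)⁻¹ * bdiag N C) < 1 := by
  have : NeZero N := ⟨by omega⟩
  set Γ : ℕ → Matrix (Fin n) (Fin n) ℝ := fun k => A k - B k * (D k)⁻¹ * C k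
  have hcycled : cyc N A - cyc N B * (bdiag N D)⁻¹ * bdiag N C = cyc N Γ := by
    rw [inv_bdiag D hDinv, cyc_mul_bdiag, cyc_mul_bdiag, cyc_sub_cyc]
  have hmonodromy : (prodDesc Γ N).map Complex.ofReal =
      prodRangeDesc (fun k => (Γ k).map Complex.ofReal) N := by
    rw [prodDesc_eq_prodRangeDesc]
    exact map_prodRangeDesc Complex.ofRealHom.mapMatrix Γ N
  rw [hcycled, specRad, specRad, hmonodromy, cyc_eq_cycleMatrix,
    cycleMatrix_map _ _ Complex.ofReal_zero]
  exact spectralRadius_lt_one_iff_of_pow_mem_iff (by omega) fun μ hμ =>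
    mem_spectrum_cycleMatrix_iff _ hμ
end

section
/- Fix N ≥ 1 and an N-periodic family of real matrices A_k ∈ ℝ^{n×n}, B_k ∈ ℝ^{n×m}, C_k ∈ ℝ^{p×n} (subscripts mod N), with cycled matrices Ǎ, B̌, Č, and state transition product Φ(j,i) := A_{j−1}···A_i for j > i, Φ(i,i) := I. Define the periodic Markov parameter M_k^{(j)} := C_{k+j} Φ(k+j, k+1) B_k for j ≥ 1 (indices mod N). Then for every j ≥ 1 and every k ∈ {0,…,N−1}, the (k′, k) block of the Np×Nm matrix Č Ǎ^{j−1} B̌ equals M_k^{(j)} when k′ = (k+j) mod N, and equals the zero matrix for all other k′. In particular, if M_k^{(j)} = 0 for all k, then Č Ǎ^{j−1} B̌ = 0. -/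
open Matrix
open scoped ENNReal NNReal

lemma stp_add {n : ℕ} (A : ℕ → Matrix (Fin n) (Fin n) ℝ) (b e : ℕ) :
    stp A (b + e) b = ((List.range' b e).reverse.map A).prod := by
  simp [stp]

lemma stp_self {n : ℕ} (A : ℕ → Matrix (Fin n) (Fin n) ℝ) (b : ℕ) : stp A b b = 1 := by
  simp [stp]

lemma stp_shift {n N : ℕ} (A : ℕ → Matrix (Fin n) (Fin n) ℝ)
    (hA : ∀ k, A k = A (k % N)) :
    ∀ e b c, b % N = c % N → stp A (b + e) b = stp A (c + e) c := by
  intro e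
  induction e with
  | zero => intro b c _; simp [stp_self]
  | succ e ih =>
    intro b c h
    rw [stp_add, stp_add, List.range'_succ, List.range'_succ]
    simp only [List.reverse_cons, List.map_append, List.prod_append, List.map_cons,
      List.map_nil, List.prod_cons, List.prod_nil, mul_one]
    have h1 : A b = A c := by rw [hA b, hA c, h]
    have h2 : (b + 1) % N = (c + 1) % N := Nat.ModEq.add_right 1 h
    have := ih (b + 1) (c + 1) h2
    rw [stp_add, stp_add] at this
    rw [this, h1]

lemma stp_step {n : ℕ} (A : ℕ → Matrix (Fin n) (Fin n) ℝ) (b e : ℕ) :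
    stp A (b + 1 + e) (b + 1) * A b = stp A (b + (e + 1)) b := by
  rw [stp_add, show b + (e+1) = b + (e+1) from rfl, stp_add, List.range'_succ]
  simp

lemma cyc_pow_apply {n N : ℕ} (hN : 0 < N) (A : ℕ → Matrix (Fin n) (Fin n) ℝ)
    (hA : ∀ k, A k = A (k % N)) :
    ∀ (e : ℕ) (k k' : Fin N) (s t : Fin n),
      (cyc N A ^ e) (k', s) (k, t) =
        if (k' : ℕ) = ((k : ℕ) + e) % N then stp A ((k : ℕ) + e) (k : ℕ) s t else 0 := by
  intro e
  induction e with
  | zero =>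
    intro k k' s t
    simp only [pow_zero, Nat.add_zero, Nat.mod_eq_of_lt k.isLt, stp_self]
    by_cases h : k' = k
    · subst h; simp [Matrix.one_apply, Prod.ext_iff]
    · have h' : (k' : ℕ) ≠ (k : ℕ) := fun hh => h (Fin.ext hh)
      simp [Matrix.one_apply, Prod.ext_iff, h, h']
  | succ e ih =>
    intro k k' s t
    rw [pow_succ, Matrix.mul_apply]
    rw [Fintype.sum_prod_type]
    set r : Fin N := finMod N hN ((k : ℕ) + 1) with hr
    have hcond : ∀ a : Fin N, ((a : ℕ) = ((k : ℕ) + 1) % N) = (a = r) := by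
      intro a
      simp [Fin.ext_iff, hr, finMod]
    have : ∀ (a : Fin N) (v : Fin n),
        (cyc N A ^ e) (k', s) (a, v) * cyc N A (a, v) (k, t) =
          if a = r then (cyc N A ^ e) (k', s) (a, v) * A (k : ℕ) v t else 0 := by
      intro a v
      simp only [cyc, hcond, mul_ite, mul_zero]
    simp only [this]
    rw [Finset.sum_comm]
    rw [Finset.sum_congr rfl (fun v _ => Finset.sum_ite_eq' Finset.univ r _)]
    simp only [Finset.mem_univ, if_true]
    have hrval : (r : ℕ) = ((k : ℕ) + 1) % N := rfl
    simp only [ih]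
    have hmod : ((r : ℕ) + e) % N = ((k : ℕ) + 1 + e) % N := by
      rw [hrval, Nat.mod_add_mod]
    have hmod2 : ((k : ℕ) + (e + 1)) % N = ((r : ℕ) + e) % N := by
      rw [hmod]; congr 1; omega
    by_cases h : (k' : ℕ) = ((k : ℕ) + (e + 1)) % N
    · have h2 : (k' : ℕ) = ((r : ℕ) + e) % N := by rw [h, hmod2]
      simp only [h, h2, if_true]
      have hshift : stp A ((r : ℕ) + e) (r : ℕ) = stp A ((k : ℕ) + 1 + e) ((k : ℕ) + 1) := by
        exact stp_shift A hA e _ _ (by rw [hrval]; simp [Nat.mod_mod_of_dvd])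
      rw [hshift]
      have hst := stp_step A (k : ℕ) e
      rw [← hst, Matrix.mul_apply]
      simp [hmod2]
    · have h2 : (k' : ℕ) ≠ ((r : ℕ) + e) % N := by rw [← hmod2]; exact h
      simp [h, h2]

/-- For `j ≥ 1`, the `(k', k)` block of the Markov parameter
`Č Ǎ^(j-1) B̌` of the cycled system equals the periodic Markov parameter `M_k^{(j)}`
when `k' = (k+j) mod N` and vanishes otherwise; in particular, if `M_k^{(j)} = 0` for
all `k` then `Č Ǎ^(j-1) B̌ = 0`. -/
theorem cycled_markov_blocks {n m p N : ℕ} (hN : 1 ≤ N)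
    (A : ℕ → Matrix (Fin n) (Fin n) ℝ) (B : ℕ → Matrix (Fin n) (Fin m) ℝ)
    (C : ℕ → Matrix (Fin p) (Fin n) ℝ)
    (hA : ∀ k, A k = A (k % N)) (hB : ∀ k, B k = B (k % N))
    (hC : ∀ k, C k = C (k % N)) :
    ∀ j : ℕ, 1 ≤ j →
      (∀ (k k' : Fin N) (s : Fin p) (t : Fin m),
        (bdiag N C * cyc N A ^ (j - 1) * cyc N B) (k', s) (k, t) =
          if (k' : ℕ) = ((k : ℕ) + j) % N then markov A B C (k : ℕ) j s t else 0) ∧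
      ((∀ k : Fin N, markov A B C (k : ℕ) j = 0) →
        bdiag N C * cyc N A ^ (j - 1) * cyc N B = 0) := by
  have hN0 : 0 < N := hN
  intro j hj
  obtain ⟨e, rfl⟩ : ∃ e, j = e + 1 := ⟨j - 1, by omega⟩
  have key : ∀ (k k' : Fin N) (s : Fin p) (t : Fin m),
      (bdiag N C * cyc N A ^ (e + 1 - 1) * cyc N B) (k', s) (k, t) =
        if (k' : ℕ) = ((k : ℕ) + (e + 1)) % N then markov A B C (k : ℕ) (e + 1) s t
        else 0 := by
    intro k k' s t
    simp only [Nat.add_sub_cancel]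
    rw [Matrix.mul_apply, Fintype.sum_prod_type]
    set r : Fin N := finMod N hN0 ((k : ℕ) + 1) with hr
    have hcond : ∀ a : Fin N, ((a : ℕ) = ((k : ℕ) + 1) % N) = (a = r) := by
      intro a; simp [Fin.ext_iff, hr, finMod]
    have h1 : ∀ (a : Fin N) (u : Fin n),
        (bdiag N C * cyc N A ^ e) (k', s) (a, u) * cyc N B (a, u) (k, t) =
          if a = r then (bdiag N C * cyc N A ^ e) (k', s) (a, u) * B (k : ℕ) u t
          else 0 := by
      intro a u; simp only [cyc, hcond, mul_ite, mul_zero]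
    simp only [h1]
    rw [Finset.sum_comm]
    rw [Finset.sum_congr rfl (fun u _ => Finset.sum_ite_eq' Finset.univ r _)]
    simp only [Finset.mem_univ, if_true]
    have h2 : ∀ u : Fin n, (bdiag N C * cyc N A ^ e) (k', s) (r, u) =
        ∑ v : Fin n, C (k' : ℕ) s v * (cyc N A ^ e) (k', v) (r, u) := by
      intro u
      rw [Matrix.mul_apply, Fintype.sum_prod_type]
      have hb' : ∀ (b : Fin N) (v : Fin n),
          bdiag N C (k', s) (b, v) * (cyc N A ^ e) (b, v) (r, u) =
            if k' = b then C (k' : ℕ) s v * (cyc N A ^ e) (k', v) (r, u) else 0 := by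
        intro b v
        by_cases hb : k' = b
        · subst hb; simp [bdiag]
        · simp [bdiag, hb]
      simp only [hb']
      rw [Finset.sum_comm]
      simp only [Finset.sum_ite_eq, Finset.mem_univ, if_true]
    simp only [h2, cyc_pow_apply hN0 A hA]
    have hrval : (r : ℕ) = ((k : ℕ) + 1) % N := rfl
    have hmod : ((r : ℕ) + e) % N = ((k : ℕ) + 1 + e) % N := by
      rw [hrval, Nat.mod_add_mod]
    have hmod2 : ((k : ℕ) + (e + 1)) % N = ((r : ℕ) + e) % N := by
      rw [hmod]; congr 1; omega
    by_cases h : (k' : ℕ) = ((k : ℕ) + (e + 1)) % N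
    · have h2' : (k' : ℕ) = ((r : ℕ) + e) % N := by rw [h, hmod2]
      simp only [if_pos h2', if_pos h]
      have hshift : stp A ((r : ℕ) + e) (r : ℕ)
          = stp A ((k : ℕ) + 1 + e) ((k : ℕ) + 1) := by
        exact stp_shift A hA e _ _ (by rw [hrval]; simp [Nat.mod_mod_of_dvd])
      have hmodval : ((k : ℕ) + 1 + e) % N = (k' : ℕ) := by
        rw [h]; congr 1; omega
      have hCe : C ((k : ℕ) + 1 + e) = C (k' : ℕ) := by
        rw [hC ((k : ℕ) + 1 + e), hmodval]
      have hM : C (k' : ℕ) * stp A ((r : ℕ) + e) (r : ℕ) * B (k : ℕ)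
          = markov A B C (k : ℕ) (e + 1) := by
        rw [markov, show (k : ℕ) + (e + 1) = (k : ℕ) + 1 + e from by omega, hshift, hCe]
      rw [← hM, Matrix.mul_apply]
      simp only [Matrix.mul_apply]
    · have h2' : (k' : ℕ) ≠ ((r : ℕ) + e) % N := by rw [← hmod2]; exact h
      simp [h, h2']
  refine ⟨key, ?_⟩
  intro hz
  ext ⟨k', s⟩ ⟨k, t⟩
  rw [key k k' s t]
  simp [hz k]
end

section
/- Fix N ≥ 1, r ≥ 1, and an N-periodic family of real matrices A_k ∈ ℝ^{n×n}, B_k ∈ ℝ^{n×m}, C_k ∈ ℝ^{m×n} (subscripts mod N). Define Φ(j,i) := A_{j−1}···A_i for j > i, Φ(i,i) := I, and M_k^{(j)} := C_{k+j} Φ(k+j, k+1) B_k for j ≥ 1 (indices mod N). Assume M_k^{(j)} = 0 for all k and all j with 1 ≤ j ≤ r−1, and that M_k^{(r)} is invertible for every k. Suppose x : ℕ → ℝ^n, u : ℕ → ℝ^m, y : ℕ → ℝ^m satisfy x(k+1) = A_k x(k) + B_k u(k) and y(k) = C_k x(k) for all k. Define ζ : ℕ → ℝ^n and û : ℕ →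 ℝ^m by ζ(0) = x(0), ζ(k+1) = (A_k − B_k (M_k^{(r)})⁻¹ C_{k+r} Φ(k+r, k)) ζ(k) + B_k (M_k^{(r)})⁻¹ y(k+r), and û(k) = −(M_k^{(r)})⁻¹ C_{k+r} Φ(k+r, k) ζ(k) + (M_k^{(r)})⁻¹ y(k+r). Then ζ(k) = x(k) and û(k) = u(k) for all k. -/
open Matrix
open scoped ENNReal NNReal

/-- **Statement 17.** (Theorem 2.) The `r`-step-delayed periodic inverse system with
matched initial condition reconstructs the state and input of the LPTV plant exactly. -/
theorem lptv_inverse_relative_degree_r {n m N : ℕ} (hN : 1 ≤ N)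
    (A : ℕ → Matrix (Fin n) (Fin n) ℝ) (B : ℕ → Matrix (Fin n) (Fin m) ℝ)
    (C : ℕ → Matrix (Fin m) (Fin n) ℝ) (r : ℕ) (hr : 1 ≤ r)
    (hA : ∀ k, A k = A (k % N)) (hB : ∀ k, B k = B (k % N))
    (hC : ∀ k, C k = C (k % N))
    (hM : ∀ k j : ℕ, 1 ≤ j → j < r → markov A B C k j = 0)
    (hMinv : ∀ k, IsUnit (markov A B C k r).det)
    (x : ℕ → Fin n → ℝ) (u y : ℕ → Fin m → ℝ)
    (hx : ∀ k, x (k + 1) = (A k).mulVec (x k) + (B k).mulVec (u k))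
    (hy : ∀ k, y k = (C k).mulVec (x k))
    (ζ : ℕ → Fin n → ℝ) (uh : ℕ → Fin m → ℝ)
    (hζ0 : ζ 0 = x 0)
    (hζ : ∀ k, ζ (k + 1) =
      (A k - B k * (markov A B C k r)⁻¹ * (C (k + r) * stp A (k + r) k)).mulVec (ζ k) +
        (B k * (markov A B C k r)⁻¹).mulVec (y (k + r)))
    (huh : ∀ k, uh k =
      -(((markov A B C k r)⁻¹ * (C (k + r) * stp A (k + r) k)).mulVec (ζ k)) +
        ((markov A B C k r)⁻¹).mulVec (y (k + r))) :
    ∀ k, ζ k = x k ∧ uh k = u k := by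
  -- Step lemma for the state transition product
  have stp_step : ∀ i j : ℕ, i ≤ j → stp A (j + 1) i = A j * stp A j i := by
    intro i j hij
    unfold stp
    have h1 : j + 1 - i = (j - i) + 1 := by omega
    rw [h1, List.range'_concat]
    have h2 : i + 1 * (j - i) = j := by omega
    rw [h2]
    simp [List.prod_append]
  have stp_refl : ∀ i : ℕ, stp A i i = 1 := by
    intro i; simp [stp]
  -- Explicit solution formula
  have hxf : ∀ k j : ℕ, x (k + j) = (stp A (k + j) k).mulVec (x k)
      + ∑ i ∈ Finset.range j,
          (stp A (k + j) (k + i + 1)).mulVec ((B (k + i)).mulVec (u (k + i))) := by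
    intro k j
    induction j with
    | zero => simp [stp_refl]
    | succ j ih =>
      have hkj : k + (j + 1) = (k + j) + 1 := by ring
      have hsum : (A (k + j)).mulVec (∑ i ∈ Finset.range j,
            (stp A (k + j) (k + i + 1)).mulVec ((B (k + i)).mulVec (u (k + i))))
          = ∑ i ∈ Finset.range j,
            (A (k + j)).mulVec ((stp A (k + j) (k + i + 1)).mulVec ((B (k + i)).mulVec (u (k + i)))) :=
        map_sum (A (k + j)).mulVecLin _ _
      have e1 : (A (k + j)).mulVec ((stp A (k + j) k).mulVec (x k))
          = (stp A (k + j + 1) k).mulVec (x k) := by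
        rw [Matrix.mulVec_mulVec, ← stp_step k (k + j) (by omega)]
      have e2 : ∑ i ∈ Finset.range j,
            (A (k + j)).mulVec ((stp A (k + j) (k + i + 1)).mulVec ((B (k + i)).mulVec (u (k + i))))
          = ∑ i ∈ Finset.range j,
            (stp A (k + j + 1) (k + i + 1)).mulVec ((B (k + i)).mulVec (u (k + i))) := by
        apply Finset.sum_congr rfl
        intro i hi
        have hi' : i < j := Finset.mem_range.mp hi
        rw [Matrix.mulVec_mulVec, ← stp_step (k + i + 1) (k + j) (by omega)]
      rw [hkj, hx (k + j), ih, Matrix.mulVec_add, hsum, e1, e2, Finset.sum_range_succ,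
        stp_refl, Matrix.one_mulVec, add_assoc]
  -- Output formula
  have hyf : ∀ k : ℕ, y (k + r) = (C (k + r) * stp A (k + r) k).mulVec (x k)
      + (markov A B C k r).mulVec (u k) := by
    intro k
    rw [hy, hxf k r, Matrix.mulVec_add]
    have hsum : (C (k + r)).mulVec (∑ i ∈ Finset.range r,
          (stp A (k + r) (k + i + 1)).mulVec ((B (k + i)).mulVec (u (k + i))))
        = ∑ i ∈ Finset.range r,
          (C (k + r)).mulVec ((stp A (k + r) (k + i + 1)).mulVec ((B (k + i)).mulVec (u (k + i)))) :=
      map_sum (C (k + r)).mulVecLin _ _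
    rw [hsum]
    congr 1
    · rw [Matrix.mulVec_mulVec]
    · rw [Finset.sum_eq_single 0]
      · have h0 : markov A B C k r = C (k + r) * stp A (k + r) (k + 1) * B k := rfl
        rw [h0, Matrix.mulVec_mulVec, Matrix.mulVec_mulVec]
        norm_num
      · intro i hi hi0
        have hi' : i < r := Finset.mem_range.mp hi
        have hz := hM (k + i) (r - i) (by omega) (by omega)
        have heq : markov A B C (k + i) (r - i)
            = C (k + r) * stp A (k + r) (k + i + 1) * B (k + i) := by
          unfold markov
          have h3 : k + i + (r - i) = k + r := by omega
          rw [h3]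
        rw [heq] at hz
        rw [Matrix.mulVec_mulVec, Matrix.mulVec_mulVec, hz, Matrix.zero_mulVec]
      · intro h
        exact absurd (Finset.mem_range.mpr (by omega)) h
  -- Main induction for the state
  have key : ∀ k, ζ k = x k := by
    intro k
    induction k with
    | zero => exact hζ0
    | succ k ih =>
      have hMi : (markov A B C k r)⁻¹ * markov A B C k r = 1 :=
        Matrix.nonsing_inv_mul _ (hMinv k)
      have hBM : B k * (markov A B C k r)⁻¹ * markov A B C k r = B k := by
        rw [Matrix.mul_assoc, hMi, Matrix.mul_one]
      rw [hζ k, ih, hyf k, hx k, Matrix.sub_mulVec, Matrix.mulVec_add,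
        Matrix.mulVec_mulVec, Matrix.mulVec_mulVec, hBM]
      abel
  intro k
  refine ⟨key k, ?_⟩
  have hMi : (markov A B C k r)⁻¹ * markov A B C k r = 1 :=
    Matrix.nonsing_inv_mul _ (hMinv k)
  rw [huh k, key k, hyf k, Matrix.mulVec_add, Matrix.mulVec_mulVec, Matrix.mulVec_mulVec,
    hMi, Matrix.one_mulVec]
  abel
end
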